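/- arXiv:1611.00448 — 2 statements merged into one kernel-verified Lean document; each statement's English description precedes it below -/
import Mathlib

section
/- Let μ ∈ ℝ, σ > 0, ζ > 0, and let a, b ∈ ℝ be arbitrary constants. Then the convolution of the probit function with a Gaussian density satisfies the closed-form identity ∫_{−∞}^{∞} Φ(ζ·a·(x + b)) · N(x | μ, σ²) dx = Φ( ζ·a·(μ + b) / √(1 + ζ²·a²·σ²) ), where N(x | μ, σ²) = (2πσ²)^{−1/2}·exp(−(x−μ)²/(2σ²)) and Φ is the standard normal cumulative distribution function. -/
/-! Write `c = ζ a`. With `Z ~ N(0, 1)` and `X ~ N(μ, σ²)` independent,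
`Φ(c (x + b)) = P(Z - c (x + b) ≤ 0)`, so the integral is `P(Z - c (X + b) ≤ 0)`, i.e. the mass
of `Iic 0` under the convolution of `N(0, 1)` with the law `N(-c (μ + b), c² σ²)` of `-c (X + b)`.
That convolution is `N(-c (μ + b), 1 + c² σ²)`, and standardising gives the right-hand side. -/

open MeasureTheory Real

/-- The Gaussian density with mean `μ` and variance `s`. -/
noncomputable def gaussPDF (μ s x : ℝ) : ℝ :=
  (2 * Real.pi * s) ^ (-(1 : ℝ) / 2) * Real.exp (-(x - μ) ^ 2 / (2 * s))

/-- The standard normal cumulative distribution function. -/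
noncomputable def stdNormalCDF (x : ℝ) : ℝ := ∫ θ in Set.Iic x, gaussPDF 0 1 θ

open ProbabilityTheory Set NNReal

lemma MeasureTheory.Measure.conv_apply {M : Type*} [AddMonoid M] [MeasurableSpace M]
    [MeasurableAdd₂ M] (μ ν : Measure M) [SFinite ν] {s : Set M} (hs : MeasurableSet s) :
    (μ ∗ ν) s = ∫⁻ x, ν ((x + ·) ⁻¹' s) ∂μ := by
  rw [Measure.conv, Measure.map_apply measurable_add hs, Measure.prod_apply (measurable_add hs)]
  rfl

lemma gaussianReal_map_const_mul_add (m : ℝ) (v : ℝ≥0) (c d : ℝ) :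
    (gaussianReal m v).map (fun x => c * x + d)
      = gaussianReal (c * m + d) ((c ^ 2).toNNReal * v) := by
  rw [show (fun x => c * x + d) = (· + d) ∘ (c * ·) from rfl,
    ← Measure.map_map (by fun_prop) (by fun_prop), gaussianReal_map_const_mul,
    gaussianReal_map_add_const]
  congr
  exact (max_eq_left (sq_nonneg c)).symm

lemma gaussPDF_eq_gaussianPDFReal (m : ℝ) (v : ℝ≥0) (x : ℝ) :
    gaussPDF m v x = gaussianPDFReal m v x := by
  rw [gaussPDF, gaussianPDFReal, Real.sqrt_eq_rpow, ← Real.rpow_neg (by positivity)]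
  norm_num

lemma integral_mul_gaussPDF (f : ℝ → ℝ) (m : ℝ) {v : ℝ≥0} (hv : v ≠ 0) :
    ∫ x, f x * gaussPDF m v x = ∫ x, f x ∂gaussianReal m v := by
  simp_rw [integral_gaussianReal_eq_integral_smul hv, smul_eq_mul, mul_comm (f _),
    gaussPDF_eq_gaussianPDFReal]

lemma stdNormalCDF_eq_toReal_gaussianReal (x : ℝ) :
    stdNormalCDF x = (gaussianReal 0 1 (Iic x)).toReal := by
  rw [gaussianReal_apply_eq_integral 0 one_ne_zero, ENNReal.toReal_ofReal
    (setIntegral_nonneg measurableSet_Iic fun θ _ => gaussianPDFReal_nonneg 0 1 θ), stdNormalCDF]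
  simpa using integral_congr_ae (ae_of_all _ (gaussPDF_eq_gaussianPDFReal 0 1))

lemma toReal_gaussianReal_Iic (m : ℝ) {v : ℝ≥0} (hv : v ≠ 0) (t : ℝ) :
    (gaussianReal m v (Iic t)).toReal = stdNormalCDF ((t - m) / √v) := by
  have hsqrt : 0 < √(v : ℝ) := by positivity
  have hstd : gaussianReal m v = (gaussianReal 0 1).map (fun x => √v * x + m) := by
    rw [gaussianReal_map_const_mul_add]
    congr
    · ring
    · ext; simp [Real.sq_sqrt v.coe_nonneg]
  have hpre : (fun x => √v * x + m) ⁻¹' Iic t = Iic ((t - m) / √v) := by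
    ext u
    simp only [mem_preimage, mem_Iic, le_div_iff₀ hsqrt]
    constructor <;> intro h <;> linarith
  rw [hstd, Measure.map_apply (by fun_prop) measurableSet_Iic, hpre,
    stdNormalCDF_eq_toReal_gaussianReal]

lemma integral_stdNormalCDF_mul_gaussPDF (c b m : ℝ) {v : ℝ≥0} (hv : v ≠ 0) :
    ∫ x, stdNormalCDF (c * (x + b)) * gaussPDF m v x
      = stdNormalCDF (c * (m + b) / √(1 + c ^ 2 * v)) := by
  set γ := gaussianReal 0 1
  set g : ℝ → ℝ := fun x => -c * x + -(c * b)
  have hΦ : ∀ x, stdNormalCDF (c * (x + b)) = (γ (Iic (0 - g x))).toReal := fun x => by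
    rw [stdNormalCDF_eq_toReal_gaussianReal, show 0 - g x = c * (x + b) by ring]
  have hmeas : Measurable fun y => γ (Iic (0 - y)) :=
    Antitone.measurable fun y y' h => measure_mono (Iic_subset_Iic.2 (by linarith))
  calc ∫ x, stdNormalCDF (c * (x + b)) * gaussPDF m v x
      = ∫ x, (γ (Iic (0 - g x))).toReal ∂gaussianReal m v := by
        simp_rw [integral_mul_gaussPDF _ _ hv, hΦ]
    _ = (∫⁻ y, γ (Iic (0 - y)) ∂(gaussianReal m v).map g).toReal := by
        rw [lintegral_map hmeas (by fun_prop)]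
        exact integral_toReal (hmeas.comp (by fun_prop)).aemeasurable
          (ae_of_all _ fun _ => measure_lt_top _ _)
    _ = (((gaussianReal m v).map g ∗ γ) (Iic 0)).toReal := by
        simp_rw [Measure.conv_apply _ _ measurableSet_Iic, preimage_const_add_Iic]
    _ = (gaussianReal (-c * m + -(c * b) + 0) ((c ^ 2).toNNReal * v + 1) (Iic 0)).toReal := by
        rw [gaussianReal_map_const_mul_add, gaussianReal_conv_gaussianReal, neg_sq]
    _ = stdNormalCDF (c * (m + b) / √(1 + c ^ 2 * v)) := by
        rw [toReal_gaussianReal_Iic _ (by positivity)]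
        push_cast [Real.coe_toNNReal _ (sq_nonneg c)]
        ring_nf

theorem stmt_2_general (μ σ ζ : ℝ) (hσ : 0 < σ) (a b : ℝ) :
    ∫ x, stdNormalCDF (ζ * a * (x + b)) * gaussPDF μ (σ ^ 2) x
      = stdNormalCDF (ζ * a * (μ + b) / Real.sqrt (1 + ζ ^ 2 * a ^ 2 * σ ^ 2)) := by
  have hv : (σ ^ 2).toNNReal ≠ 0 := by simpa using hσ.ne'
  have h := integral_stdNormalCDF_mul_gaussPDF (ζ * a) b μ hv
  rwa [Real.coe_toNNReal _ (sq_nonneg σ), mul_pow] at h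

/-- convolution of the probit function with a Gaussian density:
`∫ Φ(ζ·a·(x+b))·N(x|μ,σ²) dx = Φ(ζ·a·(μ+b)/√(1+ζ²·a²·σ²))`. -/
theorem stmt_2 (μ σ ζ : ℝ) (hσ : 0 < σ) (hζ : 0 < ζ) (a b : ℝ) :
    ∫ x, stdNormalCDF (ζ * a * (x + b)) * gaussPDF μ (σ ^ 2) x
      = stdNormalCDF (ζ * a * (μ + b) / Real.sqrt (1 + ζ ^ 2 * a ^ 2 * σ ^ 2)) :=
  stmt_2_general μ σ ζ hσ a b
end

section
/- Let c ∈ ℝ and d > 0, and let Z be a Gaussian random variable with mean c and variance d. Then the second moment of the rectified variable max(0, Z) is given in closed form by E[max(0, Z)²] = ∫ N(x | c, d)·max(0, x)² dx = Φ(c/√d)·(c² + d) + c·√d·φ(c/√d), where Φ is the standard normal cumulative distribution function and φ(x) = N(x | 0, 1) is the standard normal density. -/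
open MeasureTheory Real

/-!
Write `p` for the density of `N(μ, s)`. Since `p' x = -(x - μ) / s * p x`, the function
`F x = -s (x + μ) p x` is an antiderivative of `(x² - (μ² + s)) p x`; both are integrable, so
`F → 0` at `+∞` and `∫_a^∞ x² p = (μ² + s) ∫_a^∞ p + s (a + μ) p a`. At `a = 0`, standardising
`x = μ + √s z` turns `∫_0^∞ p` into `Φ(μ/√s)` and `s μ p 0` into `μ √s φ(μ/√s)`.
-/

open Filter Set Topology ProbabilityTheory

lemma gaussPDF_eq_gaussianPDFReal_s14 {s : ℝ} (hs : 0 ≤ s) (μ x : ℝ) :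
    gaussPDF μ s x = gaussianPDFReal μ s.toNNReal x := by
  rw [gaussPDF, gaussianPDFReal, coe_toNNReal s hs, sqrt_eq_rpow, ← rpow_neg (by positivity)]
  norm_num

lemma integrable_pow_mul_gaussPDF {s : ℝ} (hs : 0 < s) (μ : ℝ) (n : ℕ) :
    Integrable (fun x => x ^ n * gaussPDF μ s x) := by
  have h := (memLp_id_gaussianReal (μ := μ) (v := s.toNNReal) n).integrable_norm_pow'
  rw [gaussianReal_of_var_ne_zero _ (by simpa using hs),
    integrable_withDensity_iff_integrable_smul'
    (measurable_gaussianPDF _ _) (ae_of_all _ fun _ => gaussianPDF_lt_top)] at h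
  refine (integrable_norm_iff ?_).mp ?_
  · exact Continuous.aestronglyMeasurable (by unfold gaussPDF; fun_prop)
  · simpa [gaussPDF_eq_gaussianPDFReal_s14 hs.le, mul_comm,
      abs_of_nonneg (gaussianPDFReal_nonneg _ _ _)] using h

lemma gaussPDF_eq_inv_sqrt_mul_gaussPDF_zero_one {s : ℝ} (hs : 0 < s) (μ x : ℝ) :
    gaussPDF μ s x = (√s)⁻¹ * gaussPDF 0 1 ((x - μ) / √s) := by
  simp only [gaussPDF, sub_zero, mul_one, div_pow, sq_sqrt hs.le]
  rw [mul_rpow (by positivity) hs.le, show -(1:ℝ)/2 = -(1/2) by norm_num, rpow_neg hs.le,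
    ← sqrt_eq_rpow]
  field_simp

lemma gaussPDF_zero_one_neg (x : ℝ) : gaussPDF 0 1 (-x) = gaussPDF 0 1 x := by
  simp [gaussPDF]

lemma hasDerivAt_gaussPDF (μ s x : ℝ) :
    HasDerivAt (gaussPDF μ s) (-(x - μ) / s * gaussPDF μ s x) x := by
  have h : HasDerivAt (fun x => -(x - μ) ^ 2 / (2 * s)) (-(x - μ) / s) x :=
    ((((hasDerivAt_id x).sub_const μ).pow 2).neg.div_const (2 * s)).congr_deriv (by simp; ring)
  exact (h.exp.const_mul _).congr_deriv (by rw [gaussPDF]; ring)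

lemma setIntegral_comp_sub_right_Ioi {E : Type*} [NormedAddCommGroup E] [NormedSpace ℝ E]
    (f : ℝ → E) (a c : ℝ) : ∫ x in Ioi a, f (x - c) = ∫ x in Ioi (a - c), f x := by
  rw [← (measurePreserving_sub_right volume c).setIntegral_preimage_emb
    (Homeomorph.subRight c).isClosedEmbedding.measurableEmbedding f (Ioi (a - c))]
  congr 1 with x
  simp

lemma setIntegral_Ioi_gaussPDF {s : ℝ} (hs : 0 < s) (μ a : ℝ) :
    ∫ x in Ioi a, gaussPDF μ s x = stdNormalCDF ((μ - a) / √s) := by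
  have hσ : 0 < √s := sqrt_pos.2 hs
  simp_rw [gaussPDF_eq_inv_sqrt_mul_gaussPDF_zero_one hs, div_eq_mul_inv]
  rw [integral_const_mul, setIntegral_comp_sub_right_Ioi (fun x => gaussPDF 0 1 (x * (√s)⁻¹)),
    integral_comp_mul_right_Ioi _ _ (inv_pos.2 hσ), stdNormalCDF,
    show (a - μ) * (√s)⁻¹ = -((μ - a) * (√s)⁻¹) by ring, ← integral_comp_neg_Iic]
  simp_rw [gaussPDF_zero_one_neg, inv_inv, smul_eq_mul, inv_mul_cancel_left₀ hσ.ne']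

lemma hasDerivAt_neg_mul_add_mul_gaussPDF {s : ℝ} (hs : s ≠ 0) (μ x : ℝ) :
    HasDerivAt (fun x => -s * (x + μ) * gaussPDF μ s x)
      ((x ^ 2 - (μ ^ 2 + s)) * gaussPDF μ s x) x := by
  refine ((((hasDerivAt_id' x).add_const μ).const_mul (-s)).mul
    (hasDerivAt_gaussPDF μ s x)).congr_deriv ?_
  field_simp
  ring

lemma setIntegral_Ioi_sq_mul_gaussPDF {s : ℝ} (hs : 0 < s) (μ a : ℝ) :
    ∫ x in Ioi a, x ^ 2 * gaussPDF μ s x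
      = s * (a + μ) * gaussPDF μ s a + (μ ^ 2 + s) * ∫ x in Ioi a, gaussPDF μ s x := by
  have hp := integrable_pow_mul_gaussPDF hs μ
  have hp0 : Integrable (gaussPDF μ s) := by simpa using hp 0
  have hp1 : Integrable (fun x => x * gaussPDF μ s x) := by simpa using hp 1
  have hF' := hasDerivAt_neg_mul_add_mul_gaussPDF hs.ne' μ
  have hF'int : Integrable (fun x => (x ^ 2 - (μ ^ 2 + s)) * gaussPDF μ s x) := by
    simp_rw [sub_mul]; exact (hp 2).sub (hp0.const_mul _)
  have hFint : Integrable (fun x => -s * (x + μ) * gaussPDF μ s x) := by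
    simp_rw [mul_assoc, add_mul]; exact (hp1.add (hp0.const_mul μ)).const_mul (-s)
  have hlim := tendsto_zero_of_hasDerivAt_of_integrableOn_Ioi (a := a) (fun x _ => hF' x)
    hF'int.integrableOn hFint.integrableOn
  have hFTC := integral_Ioi_of_hasDerivAt_of_tendsto' (a := a) (fun x _ => hF' x)
    hF'int.integrableOn hlim
  simp_rw [sub_mul] at hFTC
  rw [integral_sub (hp 2).integrableOn (hp0.const_mul _).integrableOn, integral_const_mul] at hFTC
  linarith

lemma integral_mul_max_zero_sq (f : ℝ → ℝ) :
    ∫ x, f x * (max 0 x) ^ 2 = ∫ x in Ioi 0, x ^ 2 * f x := by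
  rw [← integral_indicator measurableSet_Ioi]
  congr 1 with x
  rcases le_or_gt x 0 with hx | hx
  · simp [hx]
  · simp [hx, max_eq_right hx.le, mul_comm]

/-- for `Z ~ N(c, d)`, the second moment of `max(0, Z)` is
`Φ(c/√d)·(c² + d) + c·√d·φ(c/√d)`, where `φ` is the standard normal density. -/
theorem stmt_14 (c d : ℝ) (hd : 0 < d) :
    ∫ x, gaussPDF c d x * (max 0 x) ^ 2
      = stdNormalCDF (c / Real.sqrt d) * (c ^ 2 + d)
          + c * Real.sqrt d * gaussPDF 0 1 (c / Real.sqrt d) := by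
  rw [integral_mul_max_zero_sq, setIntegral_Ioi_sq_mul_gaussPDF hd, setIntegral_Ioi_gaussPDF hd,
    gaussPDF_eq_inv_sqrt_mul_gaussPDF_zero_one hd c 0, zero_sub, neg_div, gaussPDF_zero_one_neg,
    sub_zero]
  linear_combination c * gaussPDF 0 1 (c / √d) * div_sqrt (x := d)
end
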